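/- For any two integrable real-valued random variables X and Y defined on a common probability space, with laws ν and ν' respectively, |G₀(ν) − G₀(ν')| ≤ (M/m)·E[|X−Y|]. In particular G₀ is Lipschitz with constant M/m with respect to the Wasserstein-1 distance. -/

import Mathlib

/-!
For a fixed `x`, coupling `X` and `Y` and using that `h` is `M`-Lipschitz gives
`H(x, ν) - M 𝔼|X - Y| ≤ H(x, ν')`, while the lower Lipschitz bound and monotonicity make
`x ↦ H(x, ν)` grow at rate at least `m`. Hence shifting any `x` with `H(x, ν) ≥ 0` to the right by
`(M/m) 𝔼|X - Y|` gives a point where `H(·, ν') ≥ 0`, so `G₀(ν') ≤ G₀(ν) + (M/m) 𝔼|X - Y|`;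
swapping `X` and `Y` gives the other inequality.
-/

open MeasureTheory

noncomputable def G0 (h : ℝ → ℝ) (ν : Measure ℝ) : ℝ :=
  sInf {x : ℝ | 0 ≤ x ∧ 0 ≤ ∫ z, h (x + z) ∂ν}

section SuperlevelInf

variable {F G : ℝ → ℝ} {m c : ℝ}

lemma nonempty_nonneg_superlevel_of_growth (hm : 0 < m)
    (hF : ∀ x t, 0 ≤ t → F x + m * t ≤ F (x + t)) :
    {x | 0 ≤ x ∧ 0 ≤ F x}.Nonempty := by
  set t := max 0 (-F 0 / m)
  refine ⟨t, le_max_left _ _, ?_⟩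
  have hFt : -F 0 ≤ m * t := (div_le_iff₀' hm).1 (le_max_right _ _)
  simpa using (hF 0 t (le_max_left _ _)).trans' (by linarith)

lemma sInf_nonneg_superlevel_le_add (hm : 0 < m) (hc : 0 ≤ c)
    (hF : ∀ x t, 0 ≤ t → F x + m * t ≤ F (x + t)) (hFG : ∀ x, F x - c ≤ G x) :
    sInf {x | 0 ≤ x ∧ 0 ≤ G x} ≤ sInf {x | 0 ≤ x ∧ 0 ≤ F x} + c / m := by
  have hshift : ∀ x ∈ {x | 0 ≤ x ∧ 0 ≤ F x}, x + c / m ∈ {x | 0 ≤ x ∧ 0 ≤ G x} := by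
    rintro x ⟨hx, hFx⟩
    have hgrow := hF x (c / m) (div_nonneg hc hm.le)
    rw [mul_div_cancel₀ c hm.ne'] at hgrow
    exact ⟨add_nonneg hx (div_nonneg hc hm.le), by linarith [hFG (x + c / m)]⟩
  rw [← sub_le_iff_le_add]
  refine le_csInf (nonempty_nonneg_superlevel_of_growth hm hF) fun x hx => ?_
  rw [sub_le_iff_le_add]
  exact csInf_le ⟨0, fun _ hy => hy.1⟩ (hshift x hx)

end SuperlevelInf

lemma LipschitzWith.integrable_comp {α E F : Type*} [MeasurableSpace α] {μ : Measure α}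
    [IsFiniteMeasure μ] [NormedAddCommGroup E] [NormedAddCommGroup F] {K : NNReal} {g : E → F}
    {f : α → E} (hg : LipschitzWith K g) (hf : Integrable f μ) : Integrable (g ∘ f) μ := by
  have hg₀ : LipschitzWith (K + 0) (fun y => g y - g 0) := hg.sub (LipschitzWith.const (g 0))
  have hint := memLp_one_iff_integrable.1 (hg₀.comp_memLp (by simp) (memLp_one_iff_integrable.2 hf))
  exact (hint.add (integrable_const (g 0))).congr (.of_forall fun a => by simp)

lemma Monotone.add_mul_sub_le {h : ℝ → ℝ} {m : ℝ} (hmono : Monotone h)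
    (hlow : ∀ x y, m * |x - y| ≤ |h x - h y|) {x y : ℝ} (hxy : x ≤ y) :
    h x + m * (y - x) ≤ h y := by
  have := hlow y x
  rwa [abs_of_nonneg (sub_nonneg.2 hxy), abs_of_nonneg (sub_nonneg.2 (hmono hxy)),
    le_sub_iff_add_le'] at this

section Coupling

variable {Ω : Type*} [MeasurableSpace Ω] {P : Measure Ω} {h : ℝ → ℝ} {K : NNReal}

lemma integral_map_comp_const_add (hh : Continuous h) {Z : Ω → ℝ} (hZ : AEMeasurable Z P)
    (x : ℝ) : ∫ z, h (x + z) ∂(P.map Z) = ∫ ω, h (x + Z ω) ∂P :=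
  integral_map hZ (hh.comp (continuous_const_add x)).aestronglyMeasurable

lemma LipschitzWith.integrable_comp_const_add [IsFiniteMeasure P] (hh : LipschitzWith K h)
    {Z : Ω → ℝ} (hZ : Integrable Z P) (x : ℝ) : Integrable (fun ω => h (x + Z ω)) P :=
  hh.integrable_comp ((integrable_const x).add hZ)

lemma integral_comp_const_add_add_mul_le [IsProbabilityMeasure P] {m : ℝ} (hmono : Monotone h)
    (hlow : ∀ x y, m * |x - y| ≤ |h x - h y|) (hh : LipschitzWith K h) {Z : Ω → ℝ}
    (hZ : Integrable Z P) {x t : ℝ} (ht : 0 ≤ t) :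
    ∫ ω, h (x + Z ω) ∂P + m * t ≤ ∫ ω, h (x + t + Z ω) ∂P := by
  have hint := hh.integrable_comp_const_add hZ
  calc ∫ ω, h (x + Z ω) ∂P + m * t = ∫ ω, (h (x + Z ω) + m * t) ∂P := by
        simp [integral_add (hint x) (integrable_const (m * t))]
    _ ≤ ∫ ω, h (x + t + Z ω) ∂P := by
        refine integral_mono ((hint x).add (integrable_const _)) (hint (x + t)) fun ω => ?_
        simpa using hmono.add_mul_sub_le hlow (by linarith : x + Z ω ≤ x + t + Z ω)

lemma integral_comp_const_add_sub_le [IsFiniteMeasure P] {M : ℝ}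
    (hup : ∀ x y, |h x - h y| ≤ M * |x - y|) (hh : LipschitzWith K h) {X Y : Ω → ℝ}
    (hX : Integrable X P) (hY : Integrable Y P) (x : ℝ) :
    ∫ ω, h (x + X ω) ∂P - ∫ ω, h (x + Y ω) ∂P ≤ M * ∫ ω, |X ω - Y ω| ∂P := by
  have hiX := hh.integrable_comp_const_add hX x
  have hiY := hh.integrable_comp_const_add hY x
  rw [← integral_sub hiX hiY, ← integral_const_mul]
  refine integral_mono (hiX.sub hiY) ((hX.sub hY).abs.const_mul M) fun ω => ?_
  simpa using (le_abs_self _).trans (hup (x + X ω) (x + Y ω))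

end Coupling

lemma G0_map_le_add {Ω : Type*} [MeasurableSpace Ω] {P : Measure Ω} [IsProbabilityMeasure P]
    {h : ℝ → ℝ} {m M : ℝ} (hm : 0 < m) (hM : 0 ≤ M) (hmono : Monotone h)
    (hlow : ∀ x y, m * |x - y| ≤ |h x - h y|) (hup : ∀ x y, |h x - h y| ≤ M * |x - y|)
    {X Y : Ω → ℝ} (hX : Integrable X P) (hY : Integrable Y P) :
    G0 h (P.map Y) ≤ G0 h (P.map X) + M / m * ∫ ω, |X ω - Y ω| ∂P := by
  have hh : LipschitzWith (Real.toNNReal M) h := LipschitzWith.of_dist_le' hup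
  have hmap {Z : Ω → ℝ} (hZ : Integrable Z P) :=
    integral_map_comp_const_add hh.continuous hZ.aemeasurable
  rw [← mul_div_right_comm]
  refine sInf_nonneg_superlevel_le_add hm (mul_nonneg hM (integral_nonneg fun _ => abs_nonneg _))
    (fun x t ht => ?_) (fun x => ?_)
  · rw [hmap hX, hmap hX]
    exact integral_comp_const_add_add_mul_le hmono hlow hh hX ht
  · rw [hmap hX, hmap hY]
    linarith [integral_comp_const_add_sub_le hup hh hX hY x]

/-- For integrable random variables `X`, `Y` with laws ν, ν',
`|G₀(ν) − G₀(ν')| ≤ (M/m)·E[|X−Y|]`. -/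
theorem G0_wasserstein_lipschitz
    (h : ℝ → ℝ) (m M : ℝ) (hm : 0 < m) (hmM : m ≤ M)
    (hmono : Monotone h)
    (hbil : ∀ x y : ℝ, m * |x - y| ≤ |h x - h y| ∧ |h x - h y| ≤ M * |x - y|)
    {Ω : Type*} [MeasurableSpace Ω] (P : Measure Ω) [IsProbabilityMeasure P]
    (X Y : Ω → ℝ) (hX : Integrable X P) (hY : Integrable Y P) :
    |sInf {x : ℝ | 0 ≤ x ∧ 0 ≤ ∫ z, h (x + z) ∂(P.map X)} -
      sInf {x : ℝ | 0 ≤ x ∧ 0 ≤ ∫ z, h (x + z) ∂(P.map Y)}| ≤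
      (M / m) * ∫ ω, |X ω - Y ω| ∂P := by
  have hlow x y := (hbil x y).1
  have hup x y := (hbil x y).2
  have hM : 0 ≤ M := hm.le.trans hmM
  have hYX := G0_map_le_add hm hM hmono hlow hup hX hY
  have hXY := G0_map_le_add hm hM hmono hlow hup hY hX
  simp_rw [abs_sub_comm (Y _)] at hXY
  change |G0 h (P.map X) - G0 h (P.map Y)| ≤ _
  exact abs_sub_le_iff.2 ⟨by linarith, by linarith⟩
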